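/- Bivariate Rayleigh monotonicity: for two jointly complex Gaussian random variables g₁, g₂ each ~ CN(0,1) with cross-correlation E[g₁ḡ₂] = ρ where 0 ≤ |ρ| < 1, the joint CDF P(|g₁|² ≤ t, |g₂|² ≤ t) is a nondecreasing function of |ρ|² for each fixed t > 0. -/

import Mathlib

open Real MeasureTheory

/-- Joint density of two jointly circularly-symmetric complex Gaussian variables
`g₁, g₂ ~ CN(0,1)` with cross-correlation `E[g₁ ḡ₂] = ρ`, `|ρ| < 1`. -/
noncomputable def cgDensity (ρ : ℂ) (z : ℂ × ℂ) : ℝ :=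
  (1 / (π^2 * (1 - ‖ρ‖^2))) *
    Real.exp (-((‖z.1‖^2 + ‖z.2‖^2 -
      2 * ((starRingEnd ℂ) ρ * z.1 * (starRingEnd ℂ) z.2).re) /
        (1 - ‖ρ‖^2)))

/-- Joint CDF `P(|g₁|² ≤ t, |g₂|² ≤ t)` of the squared envelopes. -/
noncomputable def jointCDF (ρ : ℂ) (t : ℝ) : ℝ :=
  ∫ z in {p : ℂ × ℂ | ‖p.1‖^2 ≤ t ∧ ‖p.2‖^2 ≤ t}, cgDensity ρ z

/-!
For real `s ∈ (0, 1)`, the pair `(g₁, g₂)` has the law of `(U + W₁, U + W₂)` with `U ~ CN(0, s)`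
and `W₁, W₂ ~ CN(0, 1 - s)` independent, so conditioning on `U` gives
`P(|g₁|² ≤ t, |g₂|² ≤ t) = E[R_{1-s}(U)²]`, where `R_v(c) = P(|c + W|² ≤ t)` for `W ~ CN(0, v)`
(and `R_1(0)²` for `s = 0`). For `s₁ < s₂` the Gaussian semigroup property writes `R_{1-s₁}` as the
average of `R_{1-s₂}` against `CN(0, s₂ - s₁)`; Jensen's inequality `(E X)² ≤ E X²` and the
semigroup property once more bound `E[R_{1-s₁}(U)²]` by `E[R_{1-s₂}(U')²]` with `U' ~ CN(0, s₂)`.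
A complex `ρ` reduces to `‖ρ‖` by rotating `g₂`.
-/

open Complex ENNReal

lemma mul_exp_mul_mul_exp (a b x y : ℝ) : a * rexp x * (b * rexp y) = a * b * rexp (x + y) := by
  rw [Real.exp_add]
  ring

lemma lintegral_ofReal_exp_neg_mul_sq_norm_sub {a : ℝ} (ha : 0 < a) (c : ℂ) :
    ∫⁻ u : ℂ, ENNReal.ofReal (rexp (-a * ‖u - c‖ ^ 2)) = ENNReal.ofReal (π / a) := by
  have hI : ∫ u : ℂ, rexp (-a * ‖u‖ ^ 2) = π / a := by
    rw [GaussianFourier.integral_rexp_neg_mul_sq_norm ha, finrank_real_complex]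
    norm_num
  rw [lintegral_sub_right_eq_self (fun u => ENNReal.ofReal (rexp (-a * ‖u‖ ^ 2))) c,
    ← ofReal_integral_eq_lintegral_ofReal
      (Integrable.of_integral_ne_zero (by rw [hI]; positivity))
      (Filter.Eventually.of_forall fun _ => (Real.exp_pos _).le), hI]

lemma lintegral_ofReal_mul_exp_quadratic {f : ℂ → ℝ≥0∞} {a : ℝ} (ha : 0 < a)
    (b₁ b₂ K : ℝ) (hK : 0 ≤ K)
    (hf : ∀ u, f u = ENNReal.ofReal (K * rexp (-(a * normSq u) + b₁ * u.re + b₂ * u.im))) :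
    ∫⁻ u, f u = ENNReal.ofReal (K * (π / a * rexp ((b₁ ^ 2 + b₂ ^ 2) / (4 * a)))) := by
  have hsq : ∀ u : ℂ, -(a * normSq u) + b₁ * u.re + b₂ * u.im
      = (b₁ ^ 2 + b₂ ^ 2) / (4 * a) + -a * ‖u - ⟨b₁ / (2 * a), b₂ / (2 * a)⟩‖ ^ 2 := by
    intro u
    rw [Complex.sq_norm, normSq_apply, normSq_apply, sub_re, sub_im]
    field_simp
    ring
  simp_rw [hf, hsq, Real.exp_add, ← mul_assoc]
  simp_rw [ENNReal.ofReal_mul (by positivity : 0 ≤ K * rexp ((b₁ ^ 2 + b₂ ^ 2) / (4 * a)))]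
  rw [lintegral_const_mul' _ _ ofReal_ne_top, lintegral_ofReal_exp_neg_mul_sq_norm_sub ha,
    ← ENNReal.ofReal_mul (by positivity)]
  congr 1
  ring

/-- The density of `CN(0, v)` on `ℂ ≅ ℝ²`. For `v = 0` it is the junk value `0` rather than a point
mass, so correlation `0` needs its own representation (`jointProb_zero`). -/
noncomputable def gaussDensity (v : ℝ) (z : ℂ) : ℝ≥0∞ :=
  ENNReal.ofReal ((π * v)⁻¹ * rexp (-normSq z / v))

@[fun_prop]
lemma measurable_gaussDensity (v : ℝ) : Measurable (gaussDensity v) := by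
  unfold gaussDensity
  fun_prop

lemma lintegral_gaussDensity_sub {v : ℝ} (hv : 0 < v) (c : ℂ) :
    ∫⁻ u, gaussDensity v (u - c) = 1 := by
  have hπ := pi_pos
  have h : ∀ u, gaussDensity v (u - c)
      = ENNReal.ofReal ((π * v)⁻¹) * ENNReal.ofReal (rexp (-v⁻¹ * ‖u - c‖ ^ 2)) := by
    intro u
    rw [gaussDensity, ENNReal.ofReal_mul (by positivity), Complex.sq_norm, neg_div, neg_mul,
      inv_mul_eq_div]
  simp_rw [h]
  rw [lintegral_const_mul' _ _ ofReal_ne_top,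
    lintegral_ofReal_exp_neg_mul_sq_norm_sub (inv_pos.mpr hv), ← ENNReal.ofReal_mul (by positivity),
    ← ENNReal.ofReal_one]
  congr 1
  field_simp

lemma lintegral_gaussDensity_mul_gaussDensity {p q : ℝ} (hp : 0 < p) (hq : 0 < q) (c₁ c₂ : ℂ) :
    ∫⁻ u, gaussDensity p (u - c₁) * gaussDensity q (c₂ - u) = gaussDensity (p + q) (c₂ - c₁) := by
  have hπ := pi_pos
  rw [lintegral_ofReal_mul_exp_quadratic (add_pos (inv_pos.mpr hp) (inv_pos.mpr hq))
      (2 * c₁.re / p + 2 * c₂.re / q) (2 * c₁.im / p + 2 * c₂.im / q)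
      ((π * p)⁻¹ * (π * q)⁻¹ * rexp (-normSq c₁ / p + -normSq c₂ / q)) (by positivity)]
  · rw [gaussDensity, mul_mul_mul_comm, ← Real.exp_add]
    congr 3
    · field_simp
      ring
    · simp only [normSq_apply, sub_re, sub_im]
      field_simp
      ring
  · intro u
    rw [gaussDensity, gaussDensity, ← ENNReal.ofReal_mul (by positivity)]
    congr 1
    rw [mul_exp_mul_mul_exp, mul_assoc _ (rexp _), ← Real.exp_add]
    congr 2
    simp only [normSq_apply, sub_re, sub_im]
    field_simp
    ring

/-- `gaussAvg v f c = E[f (c + W)]` for `W ~ CN(0, v)`. -/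
noncomputable def gaussAvg (v : ℝ) (f : ℂ → ℝ≥0∞) (c : ℂ) : ℝ≥0∞ :=
  ∫⁻ z, gaussDensity v (z - c) * f z

lemma measurable_gaussAvg (v : ℝ) {f : ℂ → ℝ≥0∞} (hf : Measurable f) :
    Measurable (gaussAvg v f) :=
  (show Measurable fun p : ℂ × ℂ => gaussDensity v (p.2 - p.1) * f p.2 by
    fun_prop).lintegral_prod_right'

lemma gaussAvg_mono {v : ℝ} {f g : ℂ → ℝ≥0∞} (hfg : ∀ z, f z ≤ g z) (c : ℂ) :
    gaussAvg v f c ≤ gaussAvg v g c :=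
  lintegral_mono fun z => by gcongr; exact hfg z

lemma gaussAvg_gaussAvg {a b : ℝ} (ha : 0 < a) (hb : 0 < b) {f : ℂ → ℝ≥0∞} (hf : Measurable f)
    (c : ℂ) : gaussAvg a (gaussAvg b f) c = gaussAvg (a + b) f c := by
  calc gaussAvg a (gaussAvg b f) c
      = ∫⁻ w, ∫⁻ z, gaussDensity a (w - c) * (gaussDensity b (z - w) * f z) := by
        refine lintegral_congr fun w => ?_
        rw [gaussAvg, ← lintegral_const_mul _ (by fun_prop)]
    _ = ∫⁻ z, ∫⁻ w, gaussDensity a (w - c) * gaussDensity b (z - w) * f z := by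
        rw [lintegral_lintegral_swap (by fun_prop)]
        simp only [mul_assoc]
    _ = gaussAvg (a + b) f c := by
        refine lintegral_congr fun z => ?_
        rw [lintegral_mul_const _ (by fun_prop), lintegral_gaussDensity_mul_gaussDensity ha hb]

lemma sq_lintegral_mul_le_lintegral_mul_sq {α : Type*} [MeasurableSpace α] {μ : Measure α}
    {w g : α → ℝ≥0∞} (hw : AEMeasurable w μ) (hg : AEMeasurable g μ) (hmass : ∫⁻ a, w a ∂μ = 1) :
    (∫⁻ a, w a * g a ∂μ) ^ 2 ≤ ∫⁻ a, w a * g a ^ 2 ∂μ := by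
  have hholder := lintegral_mul_norm_pow_le hw (hw.mul (hg.pow_const 2))
    (p := 1 / 2) (q := 1 / 2) (by norm_num) (by norm_num) (by norm_num)
  have hpoint : ∀ a, w a ^ (1 / 2 : ℝ) * (w a * g a ^ 2) ^ (1 / 2 : ℝ) = w a * g a := by
    intro a
    rw [ENNReal.mul_rpow_of_nonneg _ _ (by norm_num), ← mul_assoc,
      ← ENNReal.rpow_add_of_nonneg _ _ (by norm_num) (by norm_num), ← ENNReal.rpow_natCast,
      ← ENNReal.rpow_mul]
    norm_num
  simp only [Pi.mul_apply, hpoint, hmass, ENNReal.one_rpow, one_mul] at hholder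
  calc (∫⁻ a, w a * g a ∂μ) ^ 2 ≤ ((∫⁻ a, w a * g a ^ 2 ∂μ) ^ (1 / 2 : ℝ)) ^ 2 := by gcongr
    _ = ∫⁻ a, w a * g a ^ 2 ∂μ := by
        rw [← ENNReal.rpow_natCast, ← ENNReal.rpow_mul]
        norm_num

lemma sq_gaussAvg_le {v : ℝ} (hv : 0 < v) {f : ℂ → ℝ≥0∞} (hf : Measurable f) (c : ℂ) :
    gaussAvg v f c ^ 2 ≤ gaussAvg v (fun z => f z ^ 2) c :=
  sq_lintegral_mul_le_lintegral_mul_sq (by fun_prop) hf.aemeasurable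
    (lintegral_gaussDensity_sub hv c)

lemma gaussAvg_le_one {v : ℝ} (hv : 0 < v) {f : ℂ → ℝ≥0∞} (hf : ∀ z, f z ≤ 1) (c : ℂ) :
    gaussAvg v f c ≤ 1 :=
  calc gaussAvg v f c ≤ ∫⁻ z, gaussDensity v (z - c) :=
        lintegral_mono fun z => mul_le_of_le_one_right' (hf z)
    _ = 1 := lintegral_gaussDensity_sub hv c

@[fun_prop]
lemma continuous_cgDensity (ρ : ℂ) : Continuous (cgDensity ρ) := by
  unfold cgDensity
  fun_prop

lemma cgDensity_nonneg {ρ : ℂ} (hρ : ‖ρ‖ < 1) (z : ℂ × ℂ) : 0 ≤ cgDensity ρ z := by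
  have h : 0 < 1 - ‖ρ‖ ^ 2 := by nlinarith [norm_nonneg ρ]
  exact mul_nonneg (one_div_nonneg.2 (mul_nonneg (sq_nonneg π) h.le)) (Real.exp_pos _).le

lemma cgDensity_ofReal {s : ℝ} (hs : 0 ≤ s) (z₁ z₂ : ℂ) :
    cgDensity s (z₁, z₂) = 1 / (π ^ 2 * (1 - s ^ 2)) *
      rexp (-((normSq z₁ + normSq z₂ - 2 * (s * (z₁.re * z₂.re + z₁.im * z₂.im)))
        / (1 - s ^ 2))) := by
  rw [cgDensity, Complex.norm_of_nonneg hs]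
  simp only [Complex.sq_norm, mul_re, mul_im, conj_re, conj_im, ofReal_re, ofReal_im]
  ring_nf

lemma cgDensity_eq_cgDensity_norm (ρ : ℂ) (z : ℂ × ℂ) :
    cgDensity ρ z = cgDensity ‖ρ‖ (z.1, Circle.exp (arg ρ) * z.2) := by
  have hconj : (starRingEnd ℂ) ρ * z.1 * (starRingEnd ℂ) z.2
      = (starRingEnd ℂ) (‖ρ‖ : ℂ) * z.1 * (starRingEnd ℂ) (Circle.exp (arg ρ) * z.2) := by
    conv_lhs => rw [← norm_mul_exp_arg_mul_I ρ]
    simp only [map_mul, conj_ofReal, Circle.coe_exp]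
    ring
  rw [cgDensity, cgDensity, hconj, norm_mul, Circle.coe_exp, norm_exp_ofReal_mul_I, one_mul,
    norm_real, Real.norm_of_nonneg (norm_nonneg ρ)]

lemma ofReal_cgDensity_eq_gaussAvg {s : ℝ} (hs : 0 < s) (hs1 : s < 1) (z₁ z₂ : ℂ) :
    ENNReal.ofReal (cgDensity s (z₁, z₂))
      = gaussAvg s (fun u => gaussDensity (1 - s) (z₁ - u) * gaussDensity (1 - s) (z₂ - u)) 0 := by
  have hπ := pi_pos
  have hv : 0 < 1 - s := by linarith
  have hss : 0 < 1 - s ^ 2 := by nlinarith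
  symm
  rw [gaussAvg, lintegral_ofReal_mul_exp_quadratic (by positivity : 0 < s⁻¹ + 2 * (1 - s)⁻¹)
      (2 * z₁.re / (1 - s) + 2 * z₂.re / (1 - s)) (2 * z₁.im / (1 - s) + 2 * z₂.im / (1 - s))
      ((π * s)⁻¹ * (π * (1 - s))⁻¹ * (π * (1 - s))⁻¹
        * rexp (-normSq z₁ / (1 - s) + -normSq z₂ / (1 - s))) (by positivity)]
  · have ha : s⁻¹ + 2 * (1 - s)⁻¹ = (1 + s) / (s * (1 - s)) := by
      field_simp
      ring
    rw [cgDensity_ofReal hs.le, mul_mul_mul_comm, ← Real.exp_add, ha]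
    congr 2
    · field_simp
      ring
    · congr 1
      simp only [normSq_apply]
      field_simp
      ring
  · intro u
    rw [sub_zero, gaussDensity, gaussDensity, gaussDensity, ← ENNReal.ofReal_mul (by positivity),
      ← ENNReal.ofReal_mul (by positivity)]
    congr 1
    rw [mul_exp_mul_mul_exp, mul_exp_mul_mul_exp, mul_assoc _ (rexp _), ← Real.exp_add]
    congr 1
    · ring
    · congr 1
      simp only [normSq_apply, sub_re, sub_im]
      field_simp
      ring

lemma ofReal_cgDensity_zero (z : ℂ × ℂ) :
    ENNReal.ofReal (cgDensity 0 z) = gaussDensity 1 z.1 * gaussDensity 1 z.2 := by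
  obtain ⟨z₁, z₂⟩ := z
  rw [← Complex.ofReal_zero, cgDensity_ofReal le_rfl, gaussDensity, gaussDensity,
    ← ENNReal.ofReal_mul (by positivity), mul_mul_mul_comm, ← Real.exp_add]
  congr 2
  · ring
  · congr 1
    ring

def sqNormSublevel (t : ℝ) : Set ℂ := {z | ‖z‖ ^ 2 ≤ t}

lemma measurableSet_sqNormSublevel (t : ℝ) : MeasurableSet (sqNormSublevel t) :=
  measurableSet_le (by fun_prop) measurable_const

noncomputable def diskProb (v t : ℝ) : ℂ → ℝ≥0∞ :=
  gaussAvg v ((sqNormSublevel t).indicator 1)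

lemma measurable_diskProb (v t : ℝ) : Measurable (diskProb v t) :=
  measurable_gaussAvg v (measurable_one.indicator (measurableSet_sqNormSublevel t))

lemma diskProb_eq_setLIntegral (v t : ℝ) (c : ℂ) :
    diskProb v t c = ∫⁻ z in sqNormSublevel t, gaussDensity v (z - c) := by
  rw [diskProb, gaussAvg, ← lintegral_indicator (measurableSet_sqNormSublevel t)]
  refine lintegral_congr fun z => ?_
  by_cases hz : z ∈ sqNormSublevel t <;> simp [hz]

lemma gaussAvg_diskProb {a b : ℝ} (ha : 0 < a) (hb : 0 < b) (t : ℝ) :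
    gaussAvg a (diskProb b t) = diskProb (a + b) t :=
  funext (gaussAvg_gaussAvg ha hb (measurable_one.indicator (measurableSet_sqNormSublevel t)))

lemma diskProb_le_one {v : ℝ} (hv : 0 < v) (t : ℝ) (c : ℂ) : diskProb v t c ≤ 1 :=
  gaussAvg_le_one hv (fun z => Set.indicator_le_self _ _ z) c

lemma setLIntegral_prod_mul_self {α : Type*} [MeasurableSpace α] {μ : Measure α} [SFinite μ]
    {s : Set α} {g : α → ℝ≥0∞} (hg : AEMeasurable g (μ.restrict s)) :
    ∫⁻ z in s ×ˢ s, g z.1 * g z.2 ∂μ.prod μ = (∫⁻ z in s, g z ∂μ) ^ 2 := by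
  rw [← Measure.prod_restrict, lintegral_prod_mul hg hg, sq]

noncomputable def jointProb (ρ : ℂ) (t : ℝ) : ℝ≥0∞ :=
  ∫⁻ z in sqNormSublevel t ×ˢ sqNormSublevel t, ENNReal.ofReal (cgDensity ρ z)

lemma jointProb_zero (t : ℝ) : jointProb 0 t = diskProb 1 t 0 ^ 2 := by
  simp_rw [jointProb, ofReal_cgDensity_zero, diskProb_eq_setLIntegral, sub_zero]
  exact setLIntegral_prod_mul_self (by fun_prop)

lemma jointProb_ofReal_eq_gaussAvg {s : ℝ} (hs : 0 < s) (hs1 : s < 1) (t : ℝ) :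
    jointProb s t = gaussAvg s (fun u => diskProb (1 - s) t u ^ 2) 0 := by
  simp_rw [jointProb, ofReal_cgDensity_eq_gaussAvg hs hs1, gaussAvg]
  rw [lintegral_lintegral_swap (by fun_prop)]
  refine lintegral_congr fun u => ?_
  rw [lintegral_const_mul _ (by fun_prop), diskProb_eq_setLIntegral, Measure.volume_eq_prod,
    setLIntegral_prod_mul_self (g := fun z => gaussDensity (1 - s) (z - u)) (by fun_prop)]

lemma jointProb_mono_ofReal {s₁ s₂ : ℝ} (hs₁ : 0 ≤ s₁) (h12 : s₁ ≤ s₂) (hs₂ : s₂ < 1) (t : ℝ) :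
    jointProb s₁ t ≤ jointProb s₂ t := by
  rcases h12.eq_or_lt with rfl | hlt
  · rfl
  have hs₂pos : 0 < s₂ := hs₁.trans_lt hlt
  set R := diskProb (1 - s₂) t
  have hR : Measurable R := measurable_diskProb _ t
  rcases hs₁.eq_or_lt with rfl | hs₁pos
  · calc jointProb ((0 : ℝ) : ℂ) t = gaussAvg s₂ R 0 ^ 2 := by
          rw [Complex.ofReal_zero, jointProb_zero, gaussAvg_diskProb hs₂pos (sub_pos.2 hs₂),
            add_sub_cancel]
      _ ≤ gaussAvg s₂ (fun z => R z ^ 2) 0 := sq_gaussAvg_le hs₂pos hR 0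
      _ = jointProb s₂ t := (jointProb_ofReal_eq_gaussAvg hs₂pos hs₂ t).symm
  · have hsplit : diskProb (1 - s₁) t = gaussAvg (s₂ - s₁) R := by
      rw [gaussAvg_diskProb (sub_pos.2 hlt) (sub_pos.2 hs₂), sub_add_sub_cancel']
    calc jointProb s₁ t = gaussAvg s₁ (fun u => gaussAvg (s₂ - s₁) R u ^ 2) 0 := by
          rw [jointProb_ofReal_eq_gaussAvg hs₁pos (hlt.trans hs₂) t, hsplit]
      _ ≤ gaussAvg s₁ (gaussAvg (s₂ - s₁) (fun z => R z ^ 2)) 0 :=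
          gaussAvg_mono (sq_gaussAvg_le (sub_pos.2 hlt) hR) 0
      _ = gaussAvg s₂ (fun z => R z ^ 2) 0 := by
          rw [gaussAvg_gaussAvg hs₁pos (sub_pos.2 hlt) (hR.pow_const 2), add_sub_cancel]
      _ = jointProb s₂ t := (jointProb_ofReal_eq_gaussAvg hs₂pos hs₂ t).symm

lemma jointProb_le_one {s : ℝ} (hs₀ : 0 ≤ s) (hs₁ : s < 1) (t : ℝ) : jointProb s t ≤ 1 := by
  rcases hs₀.eq_or_lt with rfl | hs
  · rw [Complex.ofReal_zero, jointProb_zero]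
    exact pow_le_one₀ zero_le (diskProb_le_one one_pos t 0)
  · rw [jointProb_ofReal_eq_gaussAvg hs hs₁]
    exact gaussAvg_le_one hs (fun u => pow_le_one₀ zero_le (diskProb_le_one (by linarith) t u)) 0

lemma jointProb_eq_jointProb_norm (ρ : ℂ) (t : ℝ) : jointProb ρ t = jointProb ‖ρ‖ t := by
  rw [jointProb, jointProb]
  set S := sqNormSublevel t ×ˢ sqNormSublevel t
  set φ : ℂ × ℂ → ℂ × ℂ := Prod.map id (rotation (Circle.exp (arg ρ)))
  have hφ : MeasurePreserving φ :=
    (MeasurePreserving.id volume).prod (rotation (Circle.exp (arg ρ))).measurePreserving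
  have hpre : φ ⁻¹' S = S := by
    ext z
    simp [S, φ, sqNormSublevel, rotation_apply]
  calc ∫⁻ z in S, ENNReal.ofReal (cgDensity ρ z)
      = ∫⁻ z in φ ⁻¹' S, ENNReal.ofReal (cgDensity ‖ρ‖ (φ z)) := by
        simp_rw [hpre, cgDensity_eq_cgDensity_norm ρ]
        rfl
    _ = ∫⁻ z in S, ENNReal.ofReal (cgDensity ‖ρ‖ z) :=
        hφ.setLIntegral_comp_preimage
          ((measurableSet_sqNormSublevel t).prod (measurableSet_sqNormSublevel t))
          (continuous_cgDensity _).measurable.ennreal_ofReal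

lemma jointCDF_eq_toReal_jointProb {ρ : ℂ} (hρ : ‖ρ‖ < 1) (t : ℝ) :
    jointCDF ρ t = (jointProb ρ t).toReal :=
  integral_eq_lintegral_of_nonneg_ae (ae_of_all _ (cgDensity_nonneg hρ))
    (continuous_cgDensity ρ).aestronglyMeasurable

theorem stmt19_general (t : ℝ) (ρ₁ ρ₂ : ℂ)
    (h1 : ‖ρ₁‖ < 1) (h2 : ‖ρ₂‖ < 1)
    (hle : ‖ρ₁‖^2 ≤ ‖ρ₂‖^2) :
    jointCDF ρ₁ t ≤ jointCDF ρ₂ t := by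
  have hnorm : ‖ρ₁‖ ≤ ‖ρ₂‖ :=
    (pow_le_pow_iff_left₀ (norm_nonneg _) (norm_nonneg _) two_ne_zero).1 hle
  rw [jointCDF_eq_toReal_jointProb h1, jointCDF_eq_toReal_jointProb h2,
    jointProb_eq_jointProb_norm ρ₁, jointProb_eq_jointProb_norm ρ₂]
  exact ENNReal.toReal_mono (ne_top_of_le_ne_top one_ne_top (jointProb_le_one (norm_nonneg _) h2 t))
    (jointProb_mono_ofReal (norm_nonneg _) hnorm h2 t)

/-- Bivariate Rayleigh monotonicity: for each fixed `t > 0`, the joint CDF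
`P(|g₁|² ≤ t, |g₂|² ≤ t)` is nondecreasing in the power correlation `|ρ|²`
(for `0 ≤ |ρ| < 1`). -/
theorem stmt19 (t : ℝ) (ht : 0 < t) (ρ₁ ρ₂ : ℂ)
    (h1 : ‖ρ₁‖ < 1) (h2 : ‖ρ₂‖ < 1)
    (hle : ‖ρ₁‖^2 ≤ ‖ρ₂‖^2) :
    jointCDF ρ₁ t ≤ jointCDF ρ₂ t :=
  stmt19_general t ρ₁ ρ₂ h1 h2 hle
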